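/- Let A₁, A₂ : 𝔹₂ → ℂ be C¹ functions with A₁(0) = A₂(0) = 0 (so A_j(z) = O(|z|)). Let λ_{k,l}, λ_{k,l̄} ∈ ℂ (k,l ∈ {1,2}) satisfy λ_{k,l} = λ_{l,k} and λ_{k,l̄} = conj(λ_{l,k̄}), and let r be a C² real-valued function on a neighborhood of 0 in ℂ² with r(z) = 2 Re(z₂) + 2 Re(Σ_{k,l} λ_{k,l} z_k z_l) + Σ_{k,l} λ_{k,l̄} z_k z̄_l + o(|z|²). Let f = (f₁,f₂) : Δ → ℂ² be a C² map with f(0) = 0, satisfying the equations ∂f_j/∂ζ̄ = A_j(f) · conj(∂f_j/∂ζ) on Δ for j = 1,2, and with ∂f/∂ζ(0) = v = (v₁, 0). Then ∂²f₂/∂ζ∂ζ̄(0) = 0 and ∂²(r∘f)/∂ζ∂ζ̄(0) = λ_{1,1̄}|v₁|²; in other words, on the complex tangent space {z₂ = 0} at the origin, the Levi form of r with respect to the almost complex structure defined by these equations coincides with the Levi form of r with respect to J_st. -/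

import Mathlib

open Metric Set Filter Topology Asymptotics

noncomputable section

/-- The standard complex structure `J_st` (multiplication by `i`) on a complex
normed space, viewed as a real-linear endomorphism. -/
def Jst (E : Type*) [NormedAddCommGroup E] [NormedSpace ℂ E] : E →L[ℝ] E :=
  ContinuousLinearMap.restrictScalars ℝ (Complex.I • ContinuousLinearMap.id ℂ E)

variable {E F : Type*} [NormedAddCommGroup E] [NormedSpace ℂ E]
  [NormedAddCommGroup F] [NormedSpace ℂ F]

/-- `J` is an almost complex structure on the set `Ω`: a smooth field of real-linear
endomorphisms with `J x ∘ J x = -id`. -/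
structure IsACS (Ω : Set E) (J : E → E →L[ℝ] E) : Prop where
  smooth : ContDiffOn ℝ (⊤ : ℕ∞) J Ω
  sq : ∀ x ∈ Ω, (J x).comp (J x) = -(ContinuousLinearMap.id ℝ E)

/-- `f` is `(J', J)`-holomorphic on `s`: `Df(x) ∘ J'(x) = J(f x) ∘ Df(x)`. -/
def IsHolomorphicMapOn (J' : E → E →L[ℝ] E) (J : F → F →L[ℝ] F) (f : E → F)
    (s : Set E) : Prop :=
  ∀ x ∈ s, DifferentiableAt ℝ f x ∧
    (fderiv ℝ f x).comp (J' x) = (J (f x)).comp (fderiv ℝ f x)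

/-- The Levi form `L^J(r)(x)(X) = -d(J⋆dr)(x)(X, J x X)` where `J⋆dr` is the 1-form
`X ↦ dr(x)(J x X)` and `dω(x)(X,Y) = (Dω(x)X)(Y) - (Dω(x)Y)(X)`. -/
def leviForm (J : E → E →L[ℝ] E) (r : E → ℝ) (x : E) (X : E) : ℝ :=
  -((fderiv ℝ (fun y => (fderiv ℝ r y).comp (J y)) x X) (J x X)
    - (fderiv ℝ (fun y => (fderiv ℝ r y).comp (J y)) x (J x X)) X)

/-- `r` is strictly `J`-plurisubharmonic on `s`. -/
def StrictPSHOn (J : E → E →L[ℝ] E) (r : E → ℝ) (s : Set E) : Prop :=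
  ∀ x ∈ s, ∀ X : E, X ≠ 0 → 0 < leviForm J r x X

/-- `r` is `J`-plurisubharmonic on `s` (nonnegative Levi form). -/
def PSHOn (J : E → E →L[ℝ] E) (r : E → ℝ) (s : Set E) : Prop :=
  ∀ x ∈ s, ∀ X : E, 0 ≤ leviForm J r x X

/-- `C⁰` norm of `g` on `K`. -/
def c0Norm {G : Type*} [NormedAddCommGroup G] (g : E → G) (K : Set E) : ℝ :=
  ⨆ x : K, ‖g (x : E)‖

/-- `C¹` norm of `g` on `K`. -/
def c1Norm {G : Type*} [NormedAddCommGroup G] [NormedSpace ℝ G] (g : E → G) (K : Set E) : ℝ :=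
  ⨆ x : K, max ‖g (x : E)‖ ‖fderiv ℝ g (x : E)‖

/-- `C¹` distance between `g` and `h` on `K`. -/
def c1Dist {G : Type*} [NormedAddCommGroup G] [NormedSpace ℝ G] (g h : E → G) (K : Set E) : ℝ :=
  ⨆ x : K, max ‖g (x : E) - h (x : E)‖ ‖fderiv ℝ g (x : E) - fderiv ℝ h (x : E)‖

/-- `C²` distance between `g` and `h` on `K`. -/
def c2Dist {G : Type*} [NormedAddCommGroup G] [NormedSpace ℝ G] (g h : E → G) (K : Set E) : ℝ :=
  ⨆ x : K, max ‖g (x : E) - h (x : E)‖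
    (max ‖fderiv ℝ g (x : E) - fderiv ℝ h (x : E)‖
      ‖fderiv ℝ (fderiv ℝ g) (x : E) - fderiv ℝ (fderiv ℝ h) (x : E)‖)

/-- A `J`-holomorphic disc in `D`: a map from the unit disc `Δ ⊂ ℂ` to `D` satisfying
`Df(ζ) ∘ J_st = J(f ζ) ∘ Df(ζ)`. -/
def IsJDisc (J : F → F →L[ℝ] F) (D : Set F) (f : ℂ → F) : Prop :=
  MapsTo f (ball (0 : ℂ) 1) D ∧
  ∀ ζ ∈ ball (0 : ℂ) 1, DifferentiableAt ℝ f ζ ∧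
    (fderiv ℝ f ζ).comp (Jst ℂ) = (J (f ζ)).comp (fderiv ℝ f ζ)

/-- The Kobayashi–Royden infinitesimal pseudometric of `(D, J)`. -/
def kobayashiMetric (J : F → F →L[ℝ] F) (D : Set F) (p : F) (v : F) : ℝ :=
  sInf {α : ℝ | 0 < α ∧ ∃ f : ℂ → F, IsJDisc J D f ∧ f 0 = p ∧
    fderiv ℝ f 0 1 = α⁻¹ • v}

/-- The integrated Kobayashi pseudodistance of `(D, J)`. -/
def kobayashiDist (J : F → F →L[ℝ] F) (D : Set F) (p q : F) : ℝ :=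
  sInf {d : ℝ | ∃ γ : ℝ → F, ContDiffOn ℝ 1 γ (Icc 0 1) ∧ MapsTo γ (Icc 0 1) D ∧
    γ 0 = p ∧ γ 1 = q ∧ d = ∫ t in (0:ℝ)..1, kobayashiMetric J D (γ t) (deriv γ t)}

/-- `f` is a smooth diffeomorphism from `s` onto `t` with inverse `g`. -/
def IsDiffeoOn (f : E → F) (g : F → E) (s : Set E) (t : Set F) : Prop :=
  ContDiffOn ℝ (⊤ : ℕ∞) f s ∧ ContDiffOn ℝ (⊤ : ℕ∞) g t ∧ MapsTo f s t ∧ MapsTo g t s ∧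
  (∀ x ∈ s, g (f x) = x) ∧ (∀ y ∈ t, f (g y) = y)

/-- The Laplacian of a real function on `ℂ ≅ ℝ²`. -/
def lapR (g : ℂ → ℝ) (ζ : ℂ) : ℝ :=
  fderiv ℝ (fun w => fderiv ℝ g w 1) ζ 1
    + fderiv ℝ (fun w => fderiv ℝ g w Complex.I) ζ Complex.I

/-- The Wirtinger derivative `∂g/∂ζ`. -/
def wirtingerD (g : ℂ → ℂ) (ζ : ℂ) : ℂ :=
  (fderiv ℝ g ζ 1 - Complex.I * fderiv ℝ g ζ Complex.I) / 2

/-- The Wirtinger derivative `∂g/∂ζ̄`. -/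
def wirtingerDbar (g : ℂ → ℂ) (ζ : ℂ) : ℂ :=
  (fderiv ℝ g ζ 1 + Complex.I * fderiv ℝ g ζ Complex.I) / 2

/-- The coordinates of a point of `ℂ²`. -/
def coord2 (z : ℂ × ℂ) : Fin 2 → ℂ := ![z.1, z.2]

abbrev E2 := EuclideanSpace ℂ (Fin 2)

lemma littleo_sq_zero {G : Type*} [NormedAddCommGroup G] [NormedSpace ℝ G]
    {ρ : G → ℝ} (ho : ρ =o[𝓝 0] fun z => ‖z‖ ^ 2) : ρ 0 = 0 := by
  have h := (isLittleO_iff.1 ho) one_pos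
  have := h.self_of_nhds
  simpa using this

lemma fderiv_zero_of_littleo_sq {G : Type*} [NormedAddCommGroup G] [NormedSpace ℝ G]
    {ρ : G → ℝ} {W : Set G} (hW : IsOpen W) (h0 : (0:G) ∈ W)
    (hρ : ContDiffOn ℝ 2 ρ W) (ho : ρ =o[𝓝 0] fun z => ‖z‖ ^ 2) :
    fderiv ℝ ρ 0 = 0 := by
  have h00 : ρ 0 = 0 := littleo_sq_zero ho
  have h1 : ρ =o[𝓝 0] fun z => ‖z‖ := by
    refine ho.trans_isBigO ?_
    have : ∀ᶠ z : G in 𝓝 0, ‖‖z‖ ^ 2‖ ≤ 1 * ‖‖z‖‖ := by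
      filter_upwards [Metric.ball_mem_nhds (0:G) one_pos] with z hz
      have hz1 : ‖z‖ < 1 := mem_ball_zero_iff.1 hz
      have : ‖‖z‖ ^ 2‖ = ‖z‖ ^ 2 := Real.norm_of_nonneg (by positivity)
      rw [this, norm_norm, one_mul, sq]
      nlinarith [norm_nonneg z]
    exact isBigO_iff.2 ⟨1, this⟩
  have hd : HasFDerivAt ρ (0 : G →L[ℝ] ℝ) 0 := by
    rw [hasFDerivAt_iff_isLittleO_nhds_zero]
    have h2 : ρ =o[𝓝 0] fun h : G => h := isLittleO_norm_right.mp h1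
    simpa [h00] using h2
  exact hd.fderiv

lemma snd_fderiv_zero_of_littleo_sq {G : Type*} [NormedAddCommGroup G] [NormedSpace ℝ G]
    {ρ : G → ℝ} {W : Set G} (hW : IsOpen W) (h0 : (0:G) ∈ W)
    (hρ : ContDiffOn ℝ 2 ρ W) (ho : ρ =o[𝓝 0] fun z => ‖z‖ ^ 2) :
    fderiv ℝ (fderiv ℝ ρ) 0 = 0 := by
  have h00 : ρ 0 = 0 := littleo_sq_zero ho
  have hD0 : fderiv ℝ ρ 0 = 0 := fderiv_zero_of_littleo_sq hW h0 hρ ho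
  obtain ⟨δ, δpos, hδ⟩ := Metric.isOpen_iff.1 hW 0 h0
  have hdiff : ∀ y ∈ W, HasFDerivAt ρ (fderiv ℝ ρ y) y := fun y hy =>
    (((hρ.differentiableOn (by norm_num)).differentiableAt (hW.mem_nhds hy))).hasFDerivAt
  have hfd1 : ContDiffOn ℝ 1 (fderiv ℝ ρ) W := hρ.fderiv_of_isOpen hW (by norm_num)
  set f'' := fderiv ℝ (fderiv ℝ ρ) 0 with hf''
  have hx : HasFDerivAt (fderiv ℝ ρ) f'' 0 :=
    ((hfd1.differentiableOn (by norm_num)).differentiableAt (hW.mem_nhds h0)).hasFDerivAt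
  have hball : ball (0:G) (δ/2) ⊆ W := fun y hy => hδ (by
    have := mem_ball_zero_iff.1 hy
    exact mem_ball_zero_iff.2 (by linarith))
  have hint : interior (closedBall (0:G) (δ/2)) = ball 0 (δ/2) :=
    interior_closedBall _ (by positivity)
  -- quadratic form vanishes on small vectors
  have hquad_small : ∀ w ∈ ball (0:G) (δ/2), f'' w w = 0 := by
    intro w hw
    have hf : ∀ y ∈ interior (closedBall (0:G) (δ/2)), HasFDerivAt ρ (fderiv ℝ ρ y) y := by
      intro y hy; exact hdiff y (hball (hint ▸ hy))
    have hxw : HasFDerivWithinAt (fderiv ℝ ρ) f'' (interior (closedBall (0:G) (δ/2))) 0 :=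
      hx.hasFDerivWithinAt
    have hv : (0:G) + 0 ∈ interior (closedBall (0:G) (δ/2)) := by
      rw [hint]
      have : (0:G) ∈ ball (0:G) (δ/2) := Metric.mem_ball_self (by positivity)
      simpa using this
    have hw' : (0:G) + 0 + w ∈ interior (closedBall (0:G) (δ/2)) := by
      rw [hint]; simpa using hw
    have TA := (convex_closedBall (0:G) (δ/2)).taylor_approx_two_segment hf
      (Metric.mem_closedBall_self (by positivity)) hxw hv hw'
    have TA' : (fun h : ℝ => ρ (h • w) - (h ^ 2 / 2) • f'' w w) =o[𝓝[>] 0] fun h => h ^ 2 := by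
      refine TA.congr' ?_ (by rfl)
      filter_upwards with h
      simp [h00, hD0]
    have htend : Tendsto (fun h : ℝ => h • w) (𝓝[>] 0) (𝓝 0) := by
      have : Tendsto (fun h : ℝ => h • w) (𝓝 0) (𝓝 ((0:ℝ) • w)) :=
        ((continuous_id.smul continuous_const).tendsto 0)
      rw [zero_smul] at this
      exact this.mono_left nhdsWithin_le_nhds
    have hcomp : (fun h : ℝ => ρ (h • w)) =o[𝓝[>] 0] fun h => h ^ 2 := by
      have h1 := (ho.comp_tendsto htend)
      refine h1.trans_isBigO ?_
      refine isBigO_iff.2 ⟨‖w‖^2, ?_⟩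
      filter_upwards with h
      simp only [Function.comp]
      calc ‖‖h • w‖^2‖ = ‖h • w‖^2 := Real.norm_of_nonneg (by positivity)
        _ = (|h| * ‖w‖)^2 := by rw [norm_smul, Real.norm_eq_abs]
        _ = ‖w‖^2 * h^2 := by rw [mul_pow, sq_abs]; ring
        _ ≤ ‖w‖^2 * ‖h^2‖ := by
            rw [Real.norm_eq_abs]
            exact mul_le_mul_of_nonneg_left (le_abs_self _) (by positivity)
    have Hc : (fun h : ℝ => (h ^ 2 / 2) • f'' w w) =o[𝓝[>] 0] fun h => h ^ 2 := by
      have := hcomp.sub TA'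
      simpa using this
    by_contra hc
    set c := f'' w w with hcdef
    have hcpos : 0 < |c| := abs_pos.2 hc
    have := (isLittleO_iff.1 Hc) (show 0 < |c|/4 by positivity)
    obtain ⟨h, hh, hhpos⟩ := (this.and self_mem_nhdsWithin).exists
    have hhpos' : (0:ℝ) < h := hhpos
    have : ‖(h^2/2) • c‖ ≤ |c|/4 * ‖h^2‖ := hh
    rw [Real.norm_eq_abs, Real.norm_eq_abs, smul_eq_mul, abs_mul] at this
    rw [abs_of_pos (by positivity : (0:ℝ) < h^2/2), abs_of_pos (by positivity : (0:ℝ) < h^2)] at this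
    have hh2 : 0 < h^2 := by positivity
    nlinarith [mul_pos hh2 hcpos]
  -- quadratic form vanishes everywhere by scaling
  have hquad : ∀ w : G, f'' w w = 0 := by
    intro w
    set t : ℝ := δ / (4 * (‖w‖ + 1)) with ht
    have htpos : 0 < t := by positivity
    have hmem : t • w ∈ ball (0:G) (δ/2) := by
      rw [mem_ball_zero_iff, norm_smul, Real.norm_of_nonneg htpos.le]
      have h1 : ‖w‖ < ‖w‖ + 1 := by linarith
      have : t * ‖w‖ < t * (‖w‖ + 1) := by
        rcases eq_or_lt_of_le (norm_nonneg w) with h | h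
        · rw [← h]; simpa using by positivity
        · exact mul_lt_mul_of_pos_left h1 htpos
      have h2 : t * (‖w‖ + 1) = δ / 4 := by
        rw [ht, div_mul_eq_mul_div, mul_div_mul_right _ _ (by positivity : ‖w‖ + 1 ≠ 0)]
      linarith
    have := hquad_small (t • w) hmem
    simp only [map_smul, ContinuousLinearMap.smul_apply, smul_eq_mul] at this
    have h2 : t * (t * f'' w w) = 0 := this
    rcases mul_eq_zero.1 h2 with h | h
    · exact absurd h htpos.ne'
    · rcases mul_eq_zero.1 h with h | h
      · exact absurd h htpos.ne'
      · exact h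
  -- symmetry + polarization
  have hsymm : ∀ v w : G, f'' v w = f'' w v := by
    have hev : ∀ᶠ y in 𝓝 (0:G), HasFDerivAt ρ (fderiv ℝ ρ y) y := by
      filter_upwards [hW.mem_nhds h0] with y hy using hdiff y hy
    exact second_derivative_symmetric_of_eventually hev hx
  ext v w
  have hpol := hquad (v + w)
  simp only [map_add, ContinuousLinearMap.add_apply] at hpol
  have h1 := hquad v
  have h2 := hquad w
  have h3 := hsymm v w
  simp only [ContinuousLinearMap.zero_apply]
  linarith [hpol, h1, h2, h3]

namespace Aux

lemma wD_zero_of_fderiv {p : ℂ → ℂ} {ζ : ℂ} (h : fderiv ℝ p ζ = 0) :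
    wirtingerD p ζ = 0 := by
  simp [wirtingerD, h]

lemma wD_congr {p q : ℂ → ℂ} {ζ : ℂ} (h : p =ᶠ[𝓝 ζ] q) :
    wirtingerD p ζ = wirtingerD q ζ := by
  unfold wirtingerD; rw [h.fderiv_eq]

lemma wDbar_congr {p q : ℂ → ℂ} {ζ : ℂ} (h : p =ᶠ[𝓝 ζ] q) :
    wirtingerDbar p ζ = wirtingerDbar q ζ := by
  unfold wirtingerDbar; rw [h.fderiv_eq]

lemma fderiv_mul_zero {p q : ℂ → ℂ} {ζ : ℂ} (hp : DifferentiableAt ℝ p ζ)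
    (hq : DifferentiableAt ℝ q ζ) (hp0 : p ζ = 0) (hq0 : q ζ = 0) :
    fderiv ℝ (fun w => p w * q w) ζ = 0 := by
  rw [fderiv_fun_mul hp hq, hp0, hq0]; simp

lemma wD_mul {p q : ℂ → ℂ} {ζ : ℂ} (hp : DifferentiableAt ℝ p ζ)
    (hq : DifferentiableAt ℝ q ζ) :
    wirtingerD (fun w => p w * q w) ζ = wirtingerD p ζ * q ζ + p ζ * wirtingerD q ζ := by
  simp only [wirtingerD, fderiv_fun_mul hp hq, ContinuousLinearMap.add_apply,
    ContinuousLinearMap.smul_apply, smul_eq_mul]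
  ring

lemma wDbar_mul {p q : ℂ → ℂ} {ζ : ℂ} (hp : DifferentiableAt ℝ p ζ)
    (hq : DifferentiableAt ℝ q ζ) :
    wirtingerDbar (fun w => p w * q w) ζ
      = wirtingerDbar p ζ * q ζ + p ζ * wirtingerDbar q ζ := by
  simp only [wirtingerDbar, fderiv_fun_mul hp hq, ContinuousLinearMap.add_apply,
    ContinuousLinearMap.smul_apply, smul_eq_mul]
  ring

lemma wD_add {p q : ℂ → ℂ} {ζ : ℂ} (hp : DifferentiableAt ℝ p ζ)
    (hq : DifferentiableAt ℝ q ζ) :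
    wirtingerD (fun w => p w + q w) ζ = wirtingerD p ζ + wirtingerD q ζ := by
  simp only [wirtingerD, fderiv_fun_add hp hq, ContinuousLinearMap.add_apply]
  ring

lemma wDbar_add {p q : ℂ → ℂ} {ζ : ℂ} (hp : DifferentiableAt ℝ p ζ)
    (hq : DifferentiableAt ℝ q ζ) :
    wirtingerDbar (fun w => p w + q w) ζ = wirtingerDbar p ζ + wirtingerDbar q ζ := by
  simp only [wirtingerDbar, fderiv_fun_add hp hq, ContinuousLinearMap.add_apply]
  ring

lemma wD_const_mul (c : ℂ) {p : ℂ → ℂ} {ζ : ℂ} (hp : DifferentiableAt ℝ p ζ) :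
    wirtingerD (fun w => c * p w) ζ = c * wirtingerD p ζ := by
  simp only [wirtingerD, fderiv_const_mul hp, ContinuousLinearMap.smul_apply, smul_eq_mul]
  ring

lemma wDbar_const_mul (c : ℂ) {p : ℂ → ℂ} {ζ : ℂ} (hp : DifferentiableAt ℝ p ζ) :
    wirtingerDbar (fun w => c * p w) ζ = c * wirtingerDbar p ζ := by
  simp only [wirtingerDbar, fderiv_const_mul hp, ContinuousLinearMap.smul_apply, smul_eq_mul]
  ring

lemma fderiv_conj {p : ℂ → ℂ} {ζ : ℂ} (hp : DifferentiableAt ℝ p ζ) (u : ℂ) :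
    fderiv ℝ (fun w => (starRingEnd ℂ) (p w)) ζ u = (starRingEnd ℂ) (fderiv ℝ p ζ u) := by
  have h : HasFDerivAt (fun w => (starRingEnd ℂ) (p w))
      ((Complex.conjCLE.toContinuousLinearMap).comp (fderiv ℝ p ζ)) ζ :=
    (Complex.conjCLE.toContinuousLinearMap.hasFDerivAt).comp ζ hp.hasFDerivAt
  rw [h.fderiv]
  rfl

lemma wDbar_conj {p : ℂ → ℂ} {ζ : ℂ} (hp : DifferentiableAt ℝ p ζ) :
    wirtingerDbar (fun w => (starRingEnd ℂ) (p w)) ζ = (starRingEnd ℂ) (wirtingerD p ζ) := by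
  simp only [wirtingerDbar, wirtingerD, fderiv_conj hp, map_div₀, map_sub, map_mul,
    Complex.conj_I, map_ofNat]
  ring

lemma diff_conj {p : ℂ → ℂ} {ζ : ℂ} (hp : DifferentiableAt ℝ p ζ) :
    DifferentiableAt ℝ (fun w => (starRingEnd ℂ) (p w)) ζ :=
  (Complex.conjCLE.toContinuousLinearMap.hasFDerivAt.comp ζ hp.hasFDerivAt).differentiableAt

lemma diff_wD {p : ℂ → ℂ} {ζ : ℂ} (hp : DifferentiableAt ℝ (fderiv ℝ p) ζ) :
    DifferentiableAt ℝ (wirtingerD p) ζ := by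
  unfold wirtingerD
  have h1 : DifferentiableAt ℝ (fun w => fderiv ℝ p w 1) ζ :=
    hp.clm_apply (differentiableAt_const _)
  have h2 : DifferentiableAt ℝ (fun w => fderiv ℝ p w Complex.I) ζ :=
    hp.clm_apply (differentiableAt_const _)
  simp only [div_eq_mul_inv]
  exact (h1.sub ((differentiableAt_const Complex.I).mul h2)).mul (differentiableAt_const _)

lemma diff_wDbar {p : ℂ → ℂ} {ζ : ℂ} (hp : DifferentiableAt ℝ (fderiv ℝ p) ζ) :
    DifferentiableAt ℝ (wirtingerDbar p) ζ := by
  unfold wirtingerDbar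
  have h1 : DifferentiableAt ℝ (fun w => fderiv ℝ p w 1) ζ :=
    hp.clm_apply (differentiableAt_const _)
  have h2 : DifferentiableAt ℝ (fun w => fderiv ℝ p w Complex.I) ζ :=
    hp.clm_apply (differentiableAt_const _)
  simp only [div_eq_mul_inv]
  exact (h1.add ((differentiableAt_const Complex.I).mul h2)).mul (differentiableAt_const _)

end Aux

namespace Aux

lemma lapR_re {g : ℂ → ℂ} {U : Set ℂ} (hU : IsOpen U) (h0 : (0:ℂ) ∈ U)
    (hg : ContDiffOn ℝ 2 g U) :
    lapR (fun w => (g w).re) 0 = 4 * (wirtingerD (wirtingerDbar g) 0).re := by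
  have hdiff : ∀ w ∈ U, DifferentiableAt ℝ g w := fun w hw =>
    (hg.differentiableOn (by norm_num)).differentiableAt (hU.mem_nhds hw)
  have hfd : ContDiffOn ℝ 1 (fderiv ℝ g) U := hg.fderiv_of_isOpen hU (by norm_num)
  have hA : DifferentiableAt ℝ (fderiv ℝ g) 0 :=
    (hfd.differentiableOn (by norm_num)).differentiableAt (hU.mem_nhds h0)
  set B := fderiv ℝ (fderiv ℝ g) 0 with hB
  have hsymm : B 1 Complex.I = B Complex.I 1 := by
    have hev : ∀ᶠ y in 𝓝 (0:ℂ), HasFDerivAt g (fderiv ℝ g y) y := by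
      filter_upwards [hU.mem_nhds h0] with y hy using (hdiff y hy).hasFDerivAt
    exact second_derivative_symmetric_of_eventually hev hA.hasFDerivAt 1 Complex.I
  have hDu : ∀ u : ℂ, fderiv ℝ (fun w => fderiv ℝ g w u) 0 = B.flip u := by
    intro u
    rw [fderiv_clm_apply hA (differentiableAt_const u)]
    simp
    rfl
  have hDudiff : ∀ u : ℂ, DifferentiableAt ℝ (fun w => fderiv ℝ g w u) 0 := fun u =>
    hA.clm_apply (differentiableAt_const u)
  have hDuh : ∀ u : ℂ, HasFDerivAt (fun w => fderiv ℝ g w u) (B.flip u) 0 := by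
    intro u; rw [← hDu u]; exact (hDudiff u).hasFDerivAt
  -- LHS
  have hre : ∀ u : ℂ, (fun w => fderiv ℝ (fun t => (g t).re) w u) =ᶠ[𝓝 (0:ℂ)]
      (fun w => (fderiv ℝ g w u).re) := by
    intro u
    filter_upwards [hU.mem_nhds h0] with w hw
    have h : HasFDerivAt (fun t => (g t).re) (Complex.reCLM.comp (fderiv ℝ g w)) w :=
      (Complex.reCLM.hasFDerivAt).comp w (hdiff w hw).hasFDerivAt
    rw [h.fderiv]; rfl
  have hfre : ∀ u v : ℂ, fderiv ℝ (fun w => fderiv ℝ (fun t => (g t).re) w u) 0 v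
      = (B v u).re := by
    intro u v
    rw [(hre u).fderiv_eq]
    have h : HasFDerivAt (fun w => (fderiv ℝ g w u).re) (Complex.reCLM.comp (B.flip u)) 0 :=
      (Complex.reCLM.hasFDerivAt).comp 0 (hDuh u)
    rw [h.fderiv]; rfl
  -- RHS
  have hkey : ∀ u : ℂ,
      fderiv ℝ (wirtingerDbar g) 0 u = (2:ℂ)⁻¹ * (B u 1 + Complex.I * B u Complex.I) := by
    intro u
    have h3 : HasFDerivAt
        (fun w => (2:ℂ)⁻¹ * (fderiv ℝ g w 1 + Complex.I * fderiv ℝ g w Complex.I))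
        ((2:ℂ)⁻¹ • (B.flip 1 + Complex.I • B.flip Complex.I)) 0 :=
      ((hDuh 1).add ((hDuh Complex.I).const_mul Complex.I)).const_mul _
    have hfun : wirtingerDbar g
        = fun w => (2:ℂ)⁻¹ * (fderiv ℝ g w 1 + Complex.I * fderiv ℝ g w Complex.I) := by
      funext w; rw [wirtingerDbar, div_eq_inv_mul]
    rw [hfun, h3.fderiv]
    simp only [ContinuousLinearMap.smul_apply, ContinuousLinearMap.add_apply,
      ContinuousLinearMap.flip_apply, smul_eq_mul]
  have h4 : (4:ℂ) * wirtingerD (wirtingerDbar g) 0 = B 1 1 + B Complex.I Complex.I := by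
    rw [wirtingerD, hkey 1, hkey Complex.I, hsymm]
    have hI : Complex.I * Complex.I = -1 := Complex.I_mul_I
    linear_combination (-(B Complex.I Complex.I)) * hI
  have h5 := congrArg Complex.re h4
  simp only [Complex.mul_re, Complex.re_ofNat, Complex.im_ofNat, Complex.add_re, zero_mul,
    sub_zero] at h5
  rw [lapR, hfre 1 1, hfre Complex.I Complex.I]
  linarith [h5]

end Aux

namespace Aux

lemma lapR_add {u v : ℂ → ℝ} {U : Set ℂ} (hU : IsOpen U) (h0 : (0:ℂ) ∈ U)
    (hu : ContDiffOn ℝ 2 u U) (hv : ContDiffOn ℝ 2 v U) :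
    lapR (fun w => u w + v w) 0 = lapR u 0 + lapR v 0 := by
  have hud : ∀ w ∈ U, DifferentiableAt ℝ u w := fun w hw =>
    (hu.differentiableOn (by norm_num)).differentiableAt (hU.mem_nhds hw)
  have hvd : ∀ w ∈ U, DifferentiableAt ℝ v w := fun w hw =>
    (hv.differentiableOn (by norm_num)).differentiableAt (hU.mem_nhds hw)
  have hufd1 : ContDiffOn ℝ 1 (fderiv ℝ u) U := hu.fderiv_of_isOpen hU (by norm_num)
  have hvfd1 : ContDiffOn ℝ 1 (fderiv ℝ v) U := hv.fderiv_of_isOpen hU (by norm_num)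
  have hufd : DifferentiableAt ℝ (fderiv ℝ u) 0 :=
    (hufd1.differentiableOn (by norm_num)).differentiableAt (hU.mem_nhds h0)
  have hvfd : DifferentiableAt ℝ (fderiv ℝ v) 0 :=
    (hvfd1.differentiableOn (by norm_num)).differentiableAt (hU.mem_nhds h0)
  have hfe : ∀ c : ℂ, (fun w => fderiv ℝ (fun t => u t + v t) w c) =ᶠ[𝓝 (0:ℂ)]
      (fun w => fderiv ℝ u w c + fderiv ℝ v w c) := by
    intro c
    filter_upwards [hU.mem_nhds h0] with w hw
    rw [fderiv_fun_add (hud w hw) (hvd w hw)]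
    rfl
  have key : ∀ c c' : ℂ, fderiv ℝ (fun w => fderiv ℝ (fun t => u t + v t) w c) 0 c'
      = fderiv ℝ (fun w => fderiv ℝ u w c) 0 c' + fderiv ℝ (fun w => fderiv ℝ v w c) 0 c' := by
    intro c c'
    rw [(hfe c).fderiv_eq,
      fderiv_fun_add (hufd.clm_apply (differentiableAt_const c))
        (hvfd.clm_apply (differentiableAt_const c))]
    rfl
  simp only [lapR, key]
  ring

lemma lapR_comp_zero {ρ : ℂ × ℂ → ℝ} {W : Set (ℂ × ℂ)} (hW : IsOpen W)
    (h0W : (0 : ℂ × ℂ) ∈ W) (hρ : ContDiffOn ℝ 2 ρ W)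
    (hD0 : fderiv ℝ ρ 0 = 0) (hDD0 : fderiv ℝ (fderiv ℝ ρ) 0 = 0)
    {f : ℂ → ℂ × ℂ} (hf : ContDiffOn ℝ 2 f (ball (0:ℂ) 1)) (hf0 : f 0 = 0) :
    lapR (fun w => ρ (f w)) 0 = 0 := by
  set U : Set ℂ := ball (0:ℂ) 1 ∩ f ⁻¹' W with hUdef
  have hUopen : IsOpen U := hf.continuousOn.isOpen_inter_preimage isOpen_ball hW
  have h0U : (0:ℂ) ∈ U := ⟨mem_ball_self one_pos, by simp [hf0, h0W]⟩
  have hfd : ∀ w ∈ U, DifferentiableAt ℝ f w := fun w hw =>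
    (hf.differentiableOn (by norm_num)).differentiableAt (isOpen_ball.mem_nhds hw.1)
  have hρd : ∀ w ∈ U, DifferentiableAt ℝ ρ (f w) := fun w hw =>
    (hρ.differentiableOn (by norm_num)).differentiableAt (hW.mem_nhds hw.2)
  have hfe : ∀ c : ℂ, (fun w => fderiv ℝ (fun t => ρ (f t)) w c) =ᶠ[𝓝 (0:ℂ)]
      (fun w => fderiv ℝ ρ (f w) (fderiv ℝ f w c)) := by
    intro c
    filter_upwards [hUopen.mem_nhds h0U] with w hw
    have h := ((hρd w hw).hasFDerivAt.comp w (hfd w hw).hasFDerivAt).fderiv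
    calc fderiv ℝ (fun t => ρ (f t)) w c = fderiv ℝ (ρ ∘ f) w c := rfl
      _ = fderiv ℝ ρ (f w) (fderiv ℝ f w c) := by rw [h]; rfl
  have hρ1 : ContDiffOn ℝ 1 (fderiv ℝ ρ) W := hρ.fderiv_of_isOpen hW (by norm_num)
  have hf1 : ContDiffOn ℝ 1 (fderiv ℝ f) (ball (0:ℂ) 1) :=
    hf.fderiv_of_isOpen isOpen_ball (by norm_num)
  have hdρ0 : DifferentiableAt ℝ (fderiv ℝ ρ) (f 0) := by
    rw [hf0]
    exact (hρ1.differentiableOn (by norm_num)).differentiableAt (hW.mem_nhds h0W)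
  have hcd : DifferentiableAt ℝ (fun w => fderiv ℝ ρ (f w)) 0 := hdρ0.comp 0 (hfd 0 h0U)
  have hffd : DifferentiableAt ℝ (fderiv ℝ f) 0 :=
    (hf1.differentiableOn (by norm_num)).differentiableAt
      (isOpen_ball.mem_nhds (mem_ball_self one_pos))
  have key : ∀ c : ℂ, fderiv ℝ (fun w => fderiv ℝ (fun t => ρ (f t)) w c) 0 = 0 := by
    intro c
    rw [(hfe c).fderiv_eq,
      fderiv_clm_apply hcd (hffd.clm_apply (differentiableAt_const c))]
    have hc0 : fderiv ℝ ρ (f 0) = 0 := by rw [hf0]; exact hD0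
    have hdc : fderiv ℝ (fun w => fderiv ℝ ρ (f w)) 0 = 0 := by
      have h := (hdρ0.hasFDerivAt.comp 0 (hfd 0 h0U).hasFDerivAt).fderiv
      calc fderiv ℝ (fun w => fderiv ℝ ρ (f w)) 0 = fderiv ℝ (fderiv ℝ ρ ∘ f) 0 := rfl
        _ = (fderiv ℝ (fderiv ℝ ρ) (f 0)).comp (fderiv ℝ f 0) := h
        _ = 0 := by rw [hf0, hDD0]; rfl
    rw [hc0, hdc]
    ext v
    simp
  rw [lapR, key 1, key Complex.I]
  simp

end Aux

namespace Aux

lemma diffOn_at {U : Set ℂ} (hU : IsOpen U) {p : ℂ → ℂ} (hp : ContDiffOn ℝ 2 p U) {w : ℂ} (hw : w ∈ U) :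
    DifferentiableAt ℝ p w :=
  (hp.differentiableOn (by norm_num)).differentiableAt (hU.mem_nhds hw)

lemma diff_fderiv_at0 {U : Set ℂ} (hU : IsOpen U) (h0U : (0:ℂ) ∈ U) {p : ℂ → ℂ} (hp : ContDiffOn ℝ 2 p U) :
    DifferentiableAt ℝ (fderiv ℝ p) 0 := by
  have h1 : ContDiffOn ℝ 1 (fderiv ℝ p) U := hp.fderiv_of_isOpen hU (by norm_num)
  exact (h1.differentiableOn (by norm_num)).differentiableAt (hU.mem_nhds h0U)

lemma T_add {U : Set ℂ} (hU : IsOpen U) (h0U : (0:ℂ) ∈ U) {p q : ℂ → ℂ} (hp : ContDiffOn ℝ 2 p U) (hq : ContDiffOn ℝ 2 q U) :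
    wirtingerD (wirtingerDbar (fun w => p w + q w)) 0
      = wirtingerD (wirtingerDbar p) 0 + wirtingerD (wirtingerDbar q) 0 := by
  have hpt : wirtingerDbar (fun w => p w + q w) =ᶠ[𝓝 (0:ℂ)]
      (fun w => wirtingerDbar p w + wirtingerDbar q w) := by
    filter_upwards [hU.mem_nhds h0U] with w hw
    exact wDbar_add (diffOn_at hU hp hw) (diffOn_at hU hq hw)
  rw [wD_congr hpt,
    wD_add (diff_wDbar (diff_fderiv_at0 hU h0U hp)) (diff_wDbar (diff_fderiv_at0 hU h0U hq))]

lemma T_cmul {U : Set ℂ} (hU : IsOpen U) (h0U : (0:ℂ) ∈ U) (c : ℂ) {p : ℂ → ℂ} (hp : ContDiffOn ℝ 2 p U) :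
    wirtingerD (wirtingerDbar (fun w => c * p w)) 0
      = c * wirtingerD (wirtingerDbar p) 0 := by
  have hpt : wirtingerDbar (fun w => c * p w) =ᶠ[𝓝 (0:ℂ)]
      (fun w => c * wirtingerDbar p w) := by
    filter_upwards [hU.mem_nhds h0U] with w hw
    exact wDbar_const_mul c (diffOn_at hU hp hw)
  rw [wD_congr hpt, wD_const_mul c (diff_wDbar (diff_fderiv_at0 hU h0U hp))]

lemma T_mul_zero {U : Set ℂ} (hU : IsOpen U) (h0U : (0:ℂ) ∈ U) {p q : ℂ → ℂ} (hp : ContDiffOn ℝ 2 p U) (hq : ContDiffOn ℝ 2 q U)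
    (hp0 : p 0 = 0) (hq0 : q 0 = 0)
    (hpb : wirtingerDbar p 0 = 0) (hqb : wirtingerDbar q 0 = 0) :
    wirtingerD (wirtingerDbar (fun w => p w * q w)) 0 = 0 := by
  have hpt : wirtingerDbar (fun w => p w * q w) =ᶠ[𝓝 (0:ℂ)]
      (fun w => wirtingerDbar p w * q w + p w * wirtingerDbar q w) := by
    filter_upwards [hU.mem_nhds h0U] with w hw
    exact wDbar_mul (diffOn_at hU hp hw) (diffOn_at hU hq hw)
  rw [wD_congr hpt]
  have d1 : DifferentiableAt ℝ (fun w => wirtingerDbar p w * q w) 0 :=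
    (diff_wDbar (diff_fderiv_at0 hU h0U hp)).mul (diffOn_at hU hq h0U)
  have d2 : DifferentiableAt ℝ (fun w => p w * wirtingerDbar q w) 0 :=
    (diffOn_at hU hp h0U).mul (diff_wDbar (diff_fderiv_at0 hU h0U hq))
  rw [wD_add d1 d2]
  have hz1 : fderiv ℝ (fun w => wirtingerDbar p w * q w) 0 = 0 :=
    fderiv_mul_zero (diff_wDbar (diff_fderiv_at0 hU h0U hp)) (diffOn_at hU hq h0U) hpb hq0
  have hz2 : fderiv ℝ (fun w => p w * wirtingerDbar q w) 0 = 0 :=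
    fderiv_mul_zero (diffOn_at hU hp h0U) (diff_wDbar (diff_fderiv_at0 hU h0U hq)) hp0 hqb
  simp [wirtingerD, hz1, hz2]

lemma T_mul_conj {U : Set ℂ} (hU : IsOpen U) (h0U : (0:ℂ) ∈ U) {p q : ℂ → ℂ} (hp : ContDiffOn ℝ 2 p U) (hq : ContDiffOn ℝ 2 q U)
    (hp0 : p 0 = 0) (hq0 : q 0 = 0) (hpb : wirtingerDbar p 0 = 0) :
    wirtingerD (wirtingerDbar (fun w => p w * (starRingEnd ℂ) (q w))) 0
      = wirtingerD p 0 * (starRingEnd ℂ) (wirtingerD q 0) := by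
  have hpt : wirtingerDbar (fun w => p w * (starRingEnd ℂ) (q w)) =ᶠ[𝓝 (0:ℂ)]
      (fun w => wirtingerDbar p w * (starRingEnd ℂ) (q w)
        + p w * (starRingEnd ℂ) (wirtingerD q w)) := by
    filter_upwards [hU.mem_nhds h0U] with w hw
    rw [wDbar_mul (diffOn_at hU hp hw) (diff_conj (diffOn_at hU hq hw)),
      wDbar_conj (diffOn_at hU hq hw)]
  rw [wD_congr hpt]
  have d1 : DifferentiableAt ℝ (fun w => wirtingerDbar p w * (starRingEnd ℂ) (q w)) 0 :=
    (diff_wDbar (diff_fderiv_at0 hU h0U hp)).mul (diff_conj (diffOn_at hU hq h0U))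
  have d2 : DifferentiableAt ℝ (fun w => p w * (starRingEnd ℂ) (wirtingerD q w)) 0 :=
    (diffOn_at hU hp h0U).mul (diff_conj (diff_wD (diff_fderiv_at0 hU h0U hq)))
  rw [wD_add d1 d2]
  have hz1 : fderiv ℝ (fun w => wirtingerDbar p w * (starRingEnd ℂ) (q w)) 0 = 0 :=
    fderiv_mul_zero (diff_wDbar (diff_fderiv_at0 hU h0U hp))
      (diff_conj (diffOn_at hU hq h0U)) hpb (by simp [hq0])
  have h2 : wirtingerD (fun w => p w * (starRingEnd ℂ) (wirtingerD q w)) 0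
      = wirtingerD p 0 * (starRingEnd ℂ) (wirtingerD q 0) := by
    rw [wD_mul (diffOn_at hU hp h0U) (diff_conj (diff_wD (diff_fderiv_at0 hU h0U hq))), hp0]
    ring
  rw [h2]
  simp [wirtingerD, hz1]

end Aux

/-- **Levi form computation on `J`-holomorphic discs.** For a disc `f` solving the
quasilinear equations `∂f_j/∂ζ̄ = A_j(f) conj(∂f_j/∂ζ)` with `f(0) = 0` and tangent
vector `v = (v₁, 0)`, one has `∂²f₂/∂ζ∂ζ̄(0) = 0` and
`∂²(r∘f)/∂ζ∂ζ̄(0) = λ_{1,1̄}|v₁|²`. -/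
theorem statement10
    (A : Fin 2 → ℂ × ℂ → ℂ)
    (hA : ∀ j, ContDiffOn ℝ 1 (A j) (ball (0 : ℂ × ℂ) 1))
    (hA0 : ∀ j, A j 0 = 0)
    (lamS lamH : Fin 2 → Fin 2 → ℂ)
    (hsym : ∀ k l, lamS k l = lamS l k)
    (hherm : ∀ k l, lamH k l = starRingEnd ℂ (lamH l k))
    (r : ℂ × ℂ → ℝ) (W : Set (ℂ × ℂ)) (hW : IsOpen W) (h0W : (0 : ℂ × ℂ) ∈ W)
    (hr : ContDiffOn ℝ 2 r W)
    (hexp : (fun z : ℂ × ℂ => r z - (2 * z.2.re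
        + 2 * (∑ k, ∑ l, lamS k l * coord2 z k * coord2 z l).re
        + (∑ k, ∑ l, lamH k l * coord2 z k * starRingEnd ℂ (coord2 z l)).re))
      =o[𝓝 0] fun z : ℂ × ℂ => ‖z‖ ^ 2)
    (f : ℂ → ℂ × ℂ) (hf : ContDiffOn ℝ 2 f (ball (0 : ℂ) 1)) (hf0 : f 0 = 0)
    (heq : ∀ j, ∀ ζ ∈ ball (0 : ℂ) 1,
      wirtingerDbar (fun w => coord2 (f w) j) ζ
        = A j (f ζ) * starRingEnd ℂ (wirtingerD (fun w => coord2 (f w) j) ζ))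
    (v₁ : ℂ)
    (hv1 : wirtingerD (fun w => (f w).1) 0 = v₁)
    (hv2 : wirtingerD (fun w => (f w).2) 0 = 0) :
    wirtingerD (fun w => wirtingerDbar (fun t => (f t).2) w) 0 = 0 ∧
    lapR (fun ζ => r (f ζ)) 0 / 4 = (lamH 0 0).re * ‖v₁‖ ^ 2 := by
  have hBo : IsOpen (ball (0:ℂ) 1) := isOpen_ball
  have h01 : (0:ℂ) ∈ ball (0:ℂ) 1 := mem_ball_self one_pos
  -- coordinate functions
  have hcoord0 : (fun w => coord2 (f w) 0) = (fun w => (f w).1) := by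
    funext w; simp [coord2]
  have hcoord1 : (fun w => coord2 (f w) 1) = (fun w => (f w).2) := by
    funext w; simp [coord2]
  have hF1 : ContDiffOn ℝ 2 (fun w => (f w).1) (ball (0:ℂ) 1) :=
    (ContinuousLinearMap.fst ℝ ℂ ℂ).contDiff.comp_contDiffOn hf
  have hF2 : ContDiffOn ℝ 2 (fun w => (f w).2) (ball (0:ℂ) 1) :=
    (ContinuousLinearMap.snd ℝ ℂ ℂ).contDiff.comp_contDiffOn hf
  have hF10 : (f 0).1 = 0 := by rw [hf0]; rfl
  have hF20 : (f 0).2 = 0 := by rw [hf0]; rfl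
  have hfd0 : DifferentiableAt ℝ f 0 :=
    (hf.differentiableOn (by norm_num)).differentiableAt (hBo.mem_nhds h01)
  -- ∂̄ f_j (0) = 0
  have hbar1 : wirtingerDbar (fun w => (f w).1) 0 = 0 := by
    have h := heq 0 0 h01
    rw [hcoord0] at h
    rw [h, hf0, hA0]; ring
  have hbar2 : wirtingerDbar (fun w => (f w).2) 0 = 0 := by
    have h := heq 1 0 h01
    rw [hcoord1] at h
    rw [h, hf0, hA0]; ring
  -- Part 1
  have hAf2 : DifferentiableAt ℝ (fun w => A 1 (f w)) 0 := by
    have h1 : DifferentiableAt ℝ (A 1) (f 0) := by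
      rw [hf0]
      exact ((hA 1).differentiableOn one_ne_zero).differentiableAt
        (isOpen_ball.mem_nhds (mem_ball_self one_pos))
    exact h1.comp 0 hfd0
  have hconj2 : DifferentiableAt ℝ
      (fun w => (starRingEnd ℂ) (wirtingerD (fun t => (f t).2) w)) 0 :=
    Aux.diff_conj (Aux.diff_wD (Aux.diff_fderiv_at0 hBo h01 hF2))
  have part1 : wirtingerD (fun w => wirtingerDbar (fun t => (f t).2) w) 0 = 0 := by
    have hev : (fun w => wirtingerDbar (fun t => (f t).2) w) =ᶠ[𝓝 (0:ℂ)]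
        (fun w => A 1 (f w) * (starRingEnd ℂ) (wirtingerD (fun t => (f t).2) w)) := by
      filter_upwards [hBo.mem_nhds h01] with w hw
      have h := heq 1 w hw
      rw [hcoord1] at h
      exact h
    rw [Aux.wD_congr hev]
    have hz : fderiv ℝ
        (fun w => A 1 (f w) * (starRingEnd ℂ) (wirtingerD (fun t => (f t).2) w)) 0 = 0 :=
      Aux.fderiv_mul_zero hAf2 hconj2 (by rw [hf0]; exact hA0 1) (by rw [hv2]; simp)
    exact Aux.wD_zero_of_fderiv hz
  refine ⟨part1, ?_⟩
  have hcF1 : ContDiffOn ℝ 2 (fun w => (starRingEnd ℂ) ((f w).1)) (ball (0:ℂ) 1) :=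
    Complex.conjCLE.toContinuousLinearMap.contDiff.comp_contDiffOn hF1
  have hcF2 : ContDiffOn ℝ 2 (fun w => (starRingEnd ℂ) ((f w).2)) (ball (0:ℂ) 1) :=
    Complex.conjCLE.toContinuousLinearMap.contDiff.comp_contDiffOn hF2
  have hcm11 : ContDiffOn ℝ 2 (fun w => (f w).1 * (f w).1) (ball (0:ℂ) 1) := hF1.mul hF1
  have hcm12 : ContDiffOn ℝ 2 (fun w => (f w).1 * (f w).2) (ball (0:ℂ) 1) := hF1.mul hF2
  have hcm21 : ContDiffOn ℝ 2 (fun w => (f w).2 * (f w).1) (ball (0:ℂ) 1) := hF2.mul hF1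
  have hcm22 : ContDiffOn ℝ 2 (fun w => (f w).2 * (f w).2) (ball (0:ℂ) 1) := hF2.mul hF2
  have hcn11 : ContDiffOn ℝ 2 (fun w => (f w).1 * (starRingEnd ℂ) ((f w).1)) (ball (0:ℂ) 1) := hF1.mul hcF1
  have hcn12 : ContDiffOn ℝ 2 (fun w => (f w).1 * (starRingEnd ℂ) ((f w).2)) (ball (0:ℂ) 1) := hF1.mul hcF2
  have hcn21 : ContDiffOn ℝ 2 (fun w => (f w).2 * (starRingEnd ℂ) ((f w).1)) (ball (0:ℂ) 1) := hF2.mul hcF1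
  have hcn22 : ContDiffOn ℝ 2 (fun w => (f w).2 * (starRingEnd ℂ) ((f w).2)) (ball (0:ℂ) 1) := hF2.mul hcF2
  have hA1c : ContDiffOn ℝ 2 (fun w => 2 * (f w).2) (ball (0:ℂ) 1) := contDiffOn_const.mul hF2
  have hA2c : ContDiffOn ℝ 2 (fun w => 2 * lamS 0 0 * ((f w).1 * (f w).1)) (ball (0:ℂ) 1) := contDiffOn_const.mul hcm11
  have hA3c : ContDiffOn ℝ 2 (fun w => 2 * lamS 0 1 * ((f w).1 * (f w).2)) (ball (0:ℂ) 1) := contDiffOn_const.mul hcm12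
  have hA4c : ContDiffOn ℝ 2 (fun w => 2 * lamS 1 0 * ((f w).2 * (f w).1)) (ball (0:ℂ) 1) := contDiffOn_const.mul hcm21
  have hA5c : ContDiffOn ℝ 2 (fun w => 2 * lamS 1 1 * ((f w).2 * (f w).2)) (ball (0:ℂ) 1) := contDiffOn_const.mul hcm22
  have hA6c : ContDiffOn ℝ 2 (fun w => lamH 0 0 * ((f w).1 * (starRingEnd ℂ) ((f w).1))) (ball (0:ℂ) 1) := contDiffOn_const.mul hcn11
  have hA7c : ContDiffOn ℝ 2 (fun w => lamH 0 1 * ((f w).1 * (starRingEnd ℂ) ((f w).2))) (ball (0:ℂ) 1) := contDiffOn_const.mul hcn12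
  have hA8c : ContDiffOn ℝ 2 (fun w => lamH 1 0 * ((f w).2 * (starRingEnd ℂ) ((f w).1))) (ball (0:ℂ) 1) := contDiffOn_const.mul hcn21
  have hA9c : ContDiffOn ℝ 2 (fun w => lamH 1 1 * ((f w).2 * (starRingEnd ℂ) ((f w).2))) (ball (0:ℂ) 1) := contDiffOn_const.mul hcn22
  have hS9c : ContDiffOn ℝ 2 (fun w => lamH 1 1 * ((f w).2 * (starRingEnd ℂ) ((f w).2))) (ball (0:ℂ) 1) := hA9c
  have hS8c : ContDiffOn ℝ 2 (fun w => lamH 1 0 * ((f w).2 * (starRingEnd ℂ) ((f w).1)) + (lamH 1 1 * ((f w).2 * (starRingEnd ℂ) ((f w).2)))) (ball (0:ℂ) 1) := hA8c.add hS9c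
  have hS7c : ContDiffOn ℝ 2 (fun w => lamH 0 1 * ((f w).1 * (starRingEnd ℂ) ((f w).2)) + (lamH 1 0 * ((f w).2 * (starRingEnd ℂ) ((f w).1)) + (lamH 1 1 * ((f w).2 * (starRingEnd ℂ) ((f w).2))))) (ball (0:ℂ) 1) := hA7c.add hS8c
  have hS6c : ContDiffOn ℝ 2 (fun w => lamH 0 0 * ((f w).1 * (starRingEnd ℂ) ((f w).1)) + (lamH 0 1 * ((f w).1 * (starRingEnd ℂ) ((f w).2)) + (lamH 1 0 * ((f w).2 * (starRingEnd ℂ) ((f w).1)) + (lamH 1 1 * ((f w).2 * (starRingEnd ℂ) ((f w).2)))))) (ball (0:ℂ) 1) := hA6c.add hS7c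
  have hS5c : ContDiffOn ℝ 2 (fun w => 2 * lamS 1 1 * ((f w).2 * (f w).2) + (lamH 0 0 * ((f w).1 * (starRingEnd ℂ) ((f w).1)) + (lamH 0 1 * ((f w).1 * (starRingEnd ℂ) ((f w).2)) + (lamH 1 0 * ((f w).2 * (starRingEnd ℂ) ((f w).1)) + (lamH 1 1 * ((f w).2 * (starRingEnd ℂ) ((f w).2))))))) (ball (0:ℂ) 1) := hA5c.add hS6c
  have hS4c : ContDiffOn ℝ 2 (fun w => 2 * lamS 1 0 * ((f w).2 * (f w).1) + (2 * lamS 1 1 * ((f w).2 * (f w).2) + (lamH 0 0 * ((f w).1 * (starRingEnd ℂ) ((f w).1)) + (lamH 0 1 * ((f w).1 * (starRingEnd ℂ) ((f w).2)) + (lamH 1 0 * ((f w).2 * (starRingEnd ℂ) ((f w).1)) + (lamH 1 1 * ((f w).2 * (starRingEnd ℂ) ((f w).2)))))))) (ball (0:ℂ) 1) := hA4c.add hS5c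
  have hS3c : ContDiffOn ℝ 2 (fun w => 2 * lamS 0 1 * ((f w).1 * (f w).2) + (2 * lamS 1 0 * ((f w).2 * (f w).1) + (2 * lamS 1 1 * ((f w).2 * (f w).2) + (lamH 0 0 * ((f w).1 * (starRingEnd ℂ) ((f w).1)) + (lamH 0 1 * ((f w).1 * (starRingEnd ℂ) ((f w).2)) + (lamH 1 0 * ((f w).2 * (starRingEnd ℂ) ((f w).1)) + (lamH 1 1 * ((f w).2 * (starRingEnd ℂ) ((f w).2))))))))) (ball (0:ℂ) 1) := hA3c.add hS4c
  have hS2c : ContDiffOn ℝ 2 (fun w => 2 * lamS 0 0 * ((f w).1 * (f w).1) + (2 * lamS 0 1 * ((f w).1 * (f w).2) + (2 * lamS 1 0 * ((f w).2 * (f w).1) + (2 * lamS 1 1 * ((f w).2 * (f w).2) + (lamH 0 0 * ((f w).1 * (starRingEnd ℂ) ((f w).1)) + (lamH 0 1 * ((f w).1 * (starRingEnd ℂ) ((f w).2)) + (lamH 1 0 * ((f w).2 * (starRingEnd ℂ) ((f w).1)) + (lamH 1 1 * ((f w).2 * (starRingEnd ℂ) ((f w).2)))))))))) (ball (0:ℂ)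 1) := hA2c.add hS3c
  have hGc : ContDiffOn ℝ 2 (fun w => 2 * (f w).2 + (2 * lamS 0 0 * ((f w).1 * (f w).1) + (2 * lamS 0 1 * ((f w).1 * (f w).2) + (2 * lamS 1 0 * ((f w).2 * (f w).1) + (2 * lamS 1 1 * ((f w).2 * (f w).2) + (lamH 0 0 * ((f w).1 * (starRingEnd ℂ) ((f w).1)) + (lamH 0 1 * ((f w).1 * (starRingEnd ℂ) ((f w).2)) + (lamH 1 0 * ((f w).2 * (starRingEnd ℂ) ((f w).1)) + (lamH 1 1 * ((f w).2 * (starRingEnd ℂ) ((f w).2))))))))))) (ball (0:ℂ) 1) := hA1c.add hS2c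
  have hzm11 : wirtingerD (wirtingerDbar (fun w => (f w).1 * (f w).1)) 0 = 0 :=
    Aux.T_mul_zero hBo h01 hF1 hF1 hF10 hF10 hbar1 hbar1
  have hzm12 : wirtingerD (wirtingerDbar (fun w => (f w).1 * (f w).2)) 0 = 0 :=
    Aux.T_mul_zero hBo h01 hF1 hF2 hF10 hF20 hbar1 hbar2
  have hzm21 : wirtingerD (wirtingerDbar (fun w => (f w).2 * (f w).1)) 0 = 0 :=
    Aux.T_mul_zero hBo h01 hF2 hF1 hF20 hF10 hbar2 hbar1
  have hzm22 : wirtingerD (wirtingerDbar (fun w => (f w).2 * (f w).2)) 0 = 0 :=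
    Aux.T_mul_zero hBo h01 hF2 hF2 hF20 hF20 hbar2 hbar2
  have hzn11 : wirtingerD (wirtingerDbar (fun w => (f w).1 * (starRingEnd ℂ) ((f w).1))) 0
      = wirtingerD (fun w => (f w).1) 0 * (starRingEnd ℂ) (wirtingerD (fun w => (f w).1) 0) :=
    Aux.T_mul_conj hBo h01 hF1 hF1 hF10 hF10 hbar1
  have hzn12 : wirtingerD (wirtingerDbar (fun w => (f w).1 * (starRingEnd ℂ) ((f w).2))) 0
      = wirtingerD (fun w => (f w).1) 0 * (starRingEnd ℂ) (wirtingerD (fun w => (f w).2) 0) :=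
    Aux.T_mul_conj hBo h01 hF1 hF2 hF10 hF20 hbar1
  have hzn21 : wirtingerD (wirtingerDbar (fun w => (f w).2 * (starRingEnd ℂ) ((f w).1))) 0
      = wirtingerD (fun w => (f w).2) 0 * (starRingEnd ℂ) (wirtingerD (fun w => (f w).1) 0) :=
    Aux.T_mul_conj hBo h01 hF2 hF1 hF20 hF10 hbar2
  have hzn22 : wirtingerD (wirtingerDbar (fun w => (f w).2 * (starRingEnd ℂ) ((f w).2))) 0
      = wirtingerD (fun w => (f w).2) 0 * (starRingEnd ℂ) (wirtingerD (fun w => (f w).2) 0) :=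
    Aux.T_mul_conj hBo h01 hF2 hF2 hF20 hF20 hbar2
  have part1' : wirtingerD (wirtingerDbar (fun w => (f w).2)) 0 = 0 := part1
  have tA1 : wirtingerD (wirtingerDbar (fun w => 2 * (f w).2)) 0 = 0 := by
    rw [Aux.T_cmul hBo h01 ((2:ℂ)) hF2, part1']
    ring
  have tA2 : wirtingerD (wirtingerDbar (fun w => 2 * lamS 0 0 * ((f w).1 * (f w).1))) 0 = 0 := by
    rw [Aux.T_cmul hBo h01 (2 * lamS 0 0) hcm11, hzm11]
    ring
  have tA3 : wirtingerD (wirtingerDbar (fun w => 2 * lamS 0 1 * ((f w).1 * (f w).2))) 0 = 0 := by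
    rw [Aux.T_cmul hBo h01 (2 * lamS 0 1) hcm12, hzm12]
    ring
  have tA4 : wirtingerD (wirtingerDbar (fun w => 2 * lamS 1 0 * ((f w).2 * (f w).1))) 0 = 0 := by
    rw [Aux.T_cmul hBo h01 (2 * lamS 1 0) hcm21, hzm21]
    ring
  have tA5 : wirtingerD (wirtingerDbar (fun w => 2 * lamS 1 1 * ((f w).2 * (f w).2))) 0 = 0 := by
    rw [Aux.T_cmul hBo h01 (2 * lamS 1 1) hcm22, hzm22]
    ring
  have tA6 : wirtingerD (wirtingerDbar (fun w => lamH 0 0 * ((f w).1 * (starRingEnd ℂ) ((f w).1)))) 0 = lamH 0 0 * (v₁ * (starRingEnd ℂ) v₁) := by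
    rw [Aux.T_cmul hBo h01 (lamH 0 0) hcn11, hzn11]
    rw [hv1]
  have tA7 : wirtingerD (wirtingerDbar (fun w => lamH 0 1 * ((f w).1 * (starRingEnd ℂ) ((f w).2)))) 0 = 0 := by
    rw [Aux.T_cmul hBo h01 (lamH 0 1) hcn12, hzn12]
    rw [hv1, hv2]; simp
  have tA8 : wirtingerD (wirtingerDbar (fun w => lamH 1 0 * ((f w).2 * (starRingEnd ℂ) ((f w).1)))) 0 = 0 := by
    rw [Aux.T_cmul hBo h01 (lamH 1 0) hcn21, hzn21]
    rw [hv2]; simp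
  have tA9 : wirtingerD (wirtingerDbar (fun w => lamH 1 1 * ((f w).2 * (starRingEnd ℂ) ((f w).2)))) 0 = 0 := by
    rw [Aux.T_cmul hBo h01 (lamH 1 1) hcn22, hzn22]
    rw [hv2]; simp
  have tS9 : wirtingerD (wirtingerDbar (fun w => lamH 1 1 * ((f w).2 * (starRingEnd ℂ) ((f w).2)))) 0 = 0 := tA9
  have tS8 : wirtingerD (wirtingerDbar (fun w => lamH 1 0 * ((f w).2 * (starRingEnd ℂ) ((f w).1)) + (lamH 1 1 * ((f w).2 * (starRingEnd ℂ) ((f w).2))))) 0 = 0 := by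
    rw [Aux.T_add hBo h01 hA8c hS9c, tA8, tS9]; ring
  have tS7 : wirtingerD (wirtingerDbar (fun w => lamH 0 1 * ((f w).1 * (starRingEnd ℂ) ((f w).2)) + (lamH 1 0 * ((f w).2 * (starRingEnd ℂ) ((f w).1)) + (lamH 1 1 * ((f w).2 * (starRingEnd ℂ) ((f w).2)))))) 0 = 0 := by
    rw [Aux.T_add hBo h01 hA7c hS8c, tA7, tS8]; ring
  have tS6 : wirtingerD (wirtingerDbar (fun w => lamH 0 0 * ((f w).1 * (starRingEnd ℂ) ((f w).1)) + (lamH 0 1 * ((f w).1 * (starRingEnd ℂ) ((f w).2)) + (lamH 1 0 * ((f w).2 * (starRingEnd ℂ) ((f w).1)) + (lamH 1 1 * ((f w).2 * (starRingEnd ℂ) ((f w).2))))))) 0 = lamH 0 0 * (v₁ * (starRingEnd ℂ) v₁) := by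
    rw [Aux.T_add hBo h01 hA6c hS7c, tA6, tS7]; ring
  have tS5 : wirtingerD (wirtingerDbar (fun w => 2 * lamS 1 1 * ((f w).2 * (f w).2) + (lamH 0 0 * ((f w).1 * (starRingEnd ℂ) ((f w).1)) + (lamH 0 1 * ((f w).1 * (starRingEnd ℂ) ((f w).2)) + (lamH 1 0 * ((f w).2 * (starRingEnd ℂ) ((f w).1)) + (lamH 1 1 * ((f w).2 * (starRingEnd ℂ) ((f w).2)))))))) 0 = lamH 0 0 * (v₁ * (starRingEnd ℂ) v₁) := by
    rw [Aux.T_add hBo h01 hA5c hS6c, tA5, tS6]; ring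
  have tS4 : wirtingerD (wirtingerDbar (fun w => 2 * lamS 1 0 * ((f w).2 * (f w).1) + (2 * lamS 1 1 * ((f w).2 * (f w).2) + (lamH 0 0 * ((f w).1 * (starRingEnd ℂ) ((f w).1)) + (lamH 0 1 * ((f w).1 * (starRingEnd ℂ) ((f w).2)) + (lamH 1 0 * ((f w).2 * (starRingEnd ℂ) ((f w).1)) + (lamH 1 1 * ((f w).2 * (starRingEnd ℂ) ((f w).2))))))))) 0 = lamH 0 0 * (v₁ * (starRingEnd ℂ) v₁) := by
    rw [Aux.T_add hBo h01 hA4c hS5c, tA4, tS5]; ring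
  have tS3 : wirtingerD (wirtingerDbar (fun w => 2 * lamS 0 1 * ((f w).1 * (f w).2) + (2 * lamS 1 0 * ((f w).2 * (f w).1) + (2 * lamS 1 1 * ((f w).2 * (f w).2) + (lamH 0 0 * ((f w).1 * (starRingEnd ℂ) ((f w).1)) + (lamH 0 1 * ((f w).1 * (starRingEnd ℂ) ((f w).2)) + (lamH 1 0 * ((f w).2 * (starRingEnd ℂ) ((f w).1)) + (lamH 1 1 * ((f w).2 * (starRingEnd ℂ) ((f w).2)))))))))) 0 = lamH 0 0 * (v₁ * (starRingEnd ℂ) v₁) := by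
    rw [Aux.T_add hBo h01 hA3c hS4c, tA3, tS4]; ring
  have tS2 : wirtingerD (wirtingerDbar (fun w => 2 * lamS 0 0 * ((f w).1 * (f w).1) + (2 * lamS 0 1 * ((f w).1 * (f w).2) + (2 * lamS 1 0 * ((f w).2 * (f w).1) + (2 * lamS 1 1 * ((f w).2 * (f w).2) + (lamH 0 0 * ((f w).1 * (starRingEnd ℂ) ((f w).1)) + (lamH 0 1 * ((f w).1 * (starRingEnd ℂ) ((f w).2)) + (lamH 1 0 * ((f w).2 * (starRingEnd ℂ) ((f w).1)) + (lamH 1 1 * ((f w).2 * (starRingEnd ℂ) ((f w).2))))))))))) 0 = lamH 0 0 * (v₁ * (starRingEnd ℂ) v₁) := by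
    rw [Aux.T_add hBo h01 hA2c hS3c, tA2, tS3]; ring
  have tG : wirtingerD (wirtingerDbar (fun w => 2 * (f w).2 + (2 * lamS 0 0 * ((f w).1 * (f w).1) + (2 * lamS 0 1 * ((f w).1 * (f w).2) + (2 * lamS 1 0 * ((f w).2 * (f w).1) + (2 * lamS 1 1 * ((f w).2 * (f w).2) + (lamH 0 0 * ((f w).1 * (starRingEnd ℂ) ((f w).1)) + (lamH 0 1 * ((f w).1 * (starRingEnd ℂ) ((f w).2)) + (lamH 1 0 * ((f w).2 * (starRingEnd ℂ) ((f w).1)) + (lamH 1 1 * ((f w).2 * (starRingEnd ℂ) ((f w).2)))))))))))) 0 = lamH 0 0 * (v₁ * (starRingEnd ℂ) v₁) := by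
    rw [Aux.T_add hBo h01 hA1c hS2c, tA1, tS2]; ring
  have hGre : ∀ w : ℂ, (2 * (f w).2 + (2 * lamS 0 0 * ((f w).1 * (f w).1) + (2 * lamS 0 1 * ((f w).1 * (f w).2) + (2 * lamS 1 0 * ((f w).2 * (f w).1) + (2 * lamS 1 1 * ((f w).2 * (f w).2) + (lamH 0 0 * ((f w).1 * (starRingEnd ℂ) ((f w).1)) + (lamH 0 1 * ((f w).1 * (starRingEnd ℂ) ((f w).2)) + (lamH 1 0 * ((f w).2 * (starRingEnd ℂ) ((f w).1)) + (lamH 1 1 * ((f w).2 * (starRingEnd ℂ) ((f w).2))))))))))).re = 2 * (f w).2.re + 2 * (∑ k, ∑ l, lamS k l * coord2 (f w) k * coord2 (f w) l).re + (∑ k, ∑ l, lamH k l * coord2 (f w) k * starRingEnd ℂ (coord2 (f w) l)).re := by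
    intro w
    simp only [Fin.sum_univ_two, coord2, Matrix.cons_val_zero, Matrix.cons_val_one,
      Matrix.head_cons, Complex.add_re, Complex.mul_re, Complex.mul_im, Complex.add_im,
      Complex.conj_re, Complex.conj_im, Complex.re_ofNat, Complex.im_ofNat]
    ring
  have hPC2 : ContDiff ℝ 2 (fun z : ℂ × ℂ => 2 * z.2.re + 2 * (∑ k, ∑ l, lamS k l * coord2 z k * coord2 z l).re + (∑ k, ∑ l, lamH k l * coord2 z k * starRingEnd ℂ (coord2 z l)).re) := by
    have hz1 : ContDiff ℝ 2 (fun z : ℂ × ℂ => z.1) := contDiff_fst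
    have hz2 : ContDiff ℝ 2 (fun z : ℂ × ℂ => z.2) := contDiff_snd
    have hcz1 : ContDiff ℝ 2 (fun z : ℂ × ℂ => (starRingEnd ℂ) z.1) :=
      Complex.conjCLE.toContinuousLinearMap.contDiff.comp contDiff_fst
    have hcz2 : ContDiff ℝ 2 (fun z : ℂ × ℂ => (starRingEnd ℂ) z.2) :=
      Complex.conjCLE.toContinuousLinearMap.contDiff.comp contDiff_snd
    have hb1 : ContDiff ℝ 2 (fun z : ℂ × ℂ => 2 * z.2) := contDiff_const.mul (hz2)
    have hb2 : ContDiff ℝ 2 (fun z : ℂ × ℂ => 2 * lamS 0 0 * (z.1 * z.1)) := contDiff_const.mul (hz1.mul hz1)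
    have hb3 : ContDiff ℝ 2 (fun z : ℂ × ℂ => 2 * lamS 0 1 * (z.1 * z.2)) := contDiff_const.mul (hz1.mul hz2)
    have hb4 : ContDiff ℝ 2 (fun z : ℂ × ℂ => 2 * lamS 1 0 * (z.2 * z.1)) := contDiff_const.mul (hz2.mul hz1)
    have hb5 : ContDiff ℝ 2 (fun z : ℂ × ℂ => 2 * lamS 1 1 * (z.2 * z.2)) := contDiff_const.mul (hz2.mul hz2)
    have hb6 : ContDiff ℝ 2 (fun z : ℂ × ℂ => lamH 0 0 * (z.1 * (starRingEnd ℂ) z.1)) := contDiff_const.mul (hz1.mul hcz1)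
    have hb7 : ContDiff ℝ 2 (fun z : ℂ × ℂ => lamH 0 1 * (z.1 * (starRingEnd ℂ) z.2)) := contDiff_const.mul (hz1.mul hcz2)
    have hb8 : ContDiff ℝ 2 (fun z : ℂ × ℂ => lamH 1 0 * (z.2 * (starRingEnd ℂ) z.1)) := contDiff_const.mul (hz2.mul hcz1)
    have hb9 : ContDiff ℝ 2 (fun z : ℂ × ℂ => lamH 1 1 * (z.2 * (starRingEnd ℂ) z.2)) := contDiff_const.mul (hz2.mul hcz2)
    have ht9 : ContDiff ℝ 2 (fun z : ℂ × ℂ => lamH 1 1 * (z.2 * (starRingEnd ℂ) z.2)) := hb9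
    have ht8 : ContDiff ℝ 2 (fun z : ℂ × ℂ => lamH 1 0 * (z.2 * (starRingEnd ℂ) z.1) + (lamH 1 1 * (z.2 * (starRingEnd ℂ) z.2))) := hb8.add ht9
    have ht7 : ContDiff ℝ 2 (fun z : ℂ × ℂ => lamH 0 1 * (z.1 * (starRingEnd ℂ) z.2) + (lamH 1 0 * (z.2 * (starRingEnd ℂ) z.1) + (lamH 1 1 * (z.2 * (starRingEnd ℂ) z.2)))) := hb7.add ht8
    have ht6 : ContDiff ℝ 2 (fun z : ℂ × ℂ => lamH 0 0 * (z.1 * (starRingEnd ℂ) z.1) + (lamH 0 1 * (z.1 * (starRingEnd ℂ) z.2) + (lamH 1 0 * (z.2 * (starRingEnd ℂ) z.1) + (lamH 1 1 * (z.2 * (starRingEnd ℂ) z.2))))) := hb6.add ht7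
    have ht5 : ContDiff ℝ 2 (fun z : ℂ × ℂ => 2 * lamS 1 1 * (z.2 * z.2) + (lamH 0 0 * (z.1 * (starRingEnd ℂ) z.1) + (lamH 0 1 * (z.1 * (starRingEnd ℂ) z.2) + (lamH 1 0 * (z.2 * (starRingEnd ℂ) z.1) + (lamH 1 1 * (z.2 * (starRingEnd ℂ) z.2)))))) := hb5.add ht6
    have ht4 : ContDiff ℝ 2 (fun z : ℂ × ℂ => 2 * lamS 1 0 * (z.2 * z.1) + (2 * lamS 1 1 * (z.2 * z.2) + (lamH 0 0 * (z.1 * (starRingEnd ℂ) z.1) + (lamH 0 1 * (z.1 * (starRingEnd ℂ) z.2) + (lamH 1 0 * (z.2 * (starRingEnd ℂ) z.1) + (lamH 1 1 * (z.2 * (starRingEnd ℂ) z.2))))))) := hb4.add ht5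
    have ht3 : ContDiff ℝ 2 (fun z : ℂ × ℂ => 2 * lamS 0 1 * (z.1 * z.2) + (2 * lamS 1 0 * (z.2 * z.1) + (2 * lamS 1 1 * (z.2 * z.2) + (lamH 0 0 * (z.1 * (starRingEnd ℂ) z.1) + (lamH 0 1 * (z.1 * (starRingEnd ℂ) z.2) + (lamH 1 0 * (z.2 * (starRingEnd ℂ) z.1) + (lamH 1 1 * (z.2 * (starRingEnd ℂ) z.2)))))))) := hb3.add ht4
    have ht2 : ContDiff ℝ 2 (fun z : ℂ × ℂ => 2 * lamS 0 0 * (z.1 * z.1) + (2 * lamS 0 1 * (z.1 * z.2) + (2 * lamS 1 0 * (z.2 * z.1) + (2 * lamS 1 1 * (z.2 * z.2) + (lamH 0 0 * (z.1 * (starRingEnd ℂ) z.1) + (lamH 0 1 * (z.1 * (starRingEnd ℂ) z.2) + (lamH 1 0 * (z.2 * (starRingEnd ℂ) z.1) + (lamH 1 1 * (z.2 * (starRingEnd ℂ) z.2))))))))) := hb2.add ht3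
    have htG : ContDiff ℝ 2 (fun z : ℂ × ℂ => 2 * z.2 + (2 * lamS 0 0 * (z.1 * z.1) + (2 * lamS 0 1 * (z.1 * z.2) + (2 * lamS 1 0 * (z.2 * z.1) + (2 * lamS 1 1 * (z.2 * z.2) + (lamH 0 0 * (z.1 * (starRingEnd ℂ) z.1) + (lamH 0 1 * (z.1 * (starRingEnd ℂ) z.2) + (lamH 1 0 * (z.2 * (starRingEnd ℂ) z.1) + (lamH 1 1 * (z.2 * (starRingEnd ℂ) z.2)))))))))) := hb1.add ht2
    have hfeq : (fun z : ℂ × ℂ => 2 * z.2.re + 2 * (∑ k, ∑ l, lamS k l * coord2 z k * coord2 z l).re + (∑ k, ∑ l, lamH k l * coord2 z k * starRingEnd ℂ (coord2 z l)).re) = (fun z : ℂ × ℂ => (2 * z.2 + (2 * lamS 0 0 * (z.1 * z.1) + (2 * lamS 0 1 * (z.1 * z.2) + (2 * lamS 1 0 * (z.2 * z.1) + (2 * lamS 1 1 * (z.2 * z.2) + (lamH 0 0 * (z.1 * (starRingEnd ℂ) z.1) + (lamH 0 1 * (z.1 * (starRingEnd ℂ) z.2) + (lamH 1 0 * (z.2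 * (starRingEnd ℂ) z.1) + (lamH 1 1 * (z.2 * (starRingEnd ℂ) z.2)))))))))).re) := by
      funext z
      simp only [Fin.sum_univ_two, coord2, Matrix.cons_val_zero, Matrix.cons_val_one,
        Matrix.head_cons, Complex.add_re, Complex.mul_re, Complex.mul_im, Complex.add_im,
        Complex.conj_re, Complex.conj_im, Complex.re_ofNat, Complex.im_ofNat]
      ring
    rw [hfeq]
    exact Complex.reCLM.contDiff.comp htG
  have hrho2 : ContDiffOn ℝ 2 (fun z : ℂ × ℂ => r z - (2 * z.2.re + 2 * (∑ k, ∑ l, lamS k l * coord2 z k * coord2 z l).re + (∑ k, ∑ l, lamH k l * coord2 z k * starRingEnd ℂ (coord2 z l)).re)) W := hr.sub hPC2.contDiffOn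
  have hD10 : fderiv ℝ (fun z : ℂ × ℂ => r z - (2 * z.2.re + 2 * (∑ k, ∑ l, lamS k l * coord2 z k * coord2 z l).re + (∑ k, ∑ l, lamH k l * coord2 z k * starRingEnd ℂ (coord2 z l)).re)) 0 = 0 :=
    fderiv_zero_of_littleo_sq hW h0W hrho2 hexp
  have hD20 : fderiv ℝ (fderiv ℝ (fun z : ℂ × ℂ => r z - (2 * z.2.re + 2 * (∑ k, ∑ l, lamS k l * coord2 z k * coord2 z l).re + (∑ k, ∑ l, lamH k l * coord2 z k * starRingEnd ℂ (coord2 z l)).re))) 0 = 0 :=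
    snd_fderiv_zero_of_littleo_sq hW h0W hrho2 hexp
  have hzero : lapR (fun w => r (f w) - (2 * (f w).2.re + 2 * (∑ k, ∑ l, lamS k l * coord2 (f w) k * coord2 (f w) l).re + (∑ k, ∑ l, lamH k l * coord2 (f w) k * starRingEnd ℂ (coord2 (f w) l)).re)) 0 = 0 :=
    Aux.lapR_comp_zero hW h0W hrho2 hD10 hD20 hf hf0
  have hU0o : IsOpen (ball (0:ℂ) 1 ∩ f ⁻¹' W) := hf.continuousOn.isOpen_inter_preimage isOpen_ball hW
  have h0U0 : (0:ℂ) ∈ (ball (0:ℂ) 1 ∩ f ⁻¹' W) := ⟨mem_ball_self one_pos, by simp [hf0, h0W]⟩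
  have hGreC : ContDiffOn ℝ 2 (fun w => (2 * (f w).2 + (2 * lamS 0 0 * ((f w).1 * (f w).1) + (2 * lamS 0 1 * ((f w).1 * (f w).2) + (2 * lamS 1 0 * ((f w).2 * (f w).1) + (2 * lamS 1 1 * ((f w).2 * (f w).2) + (lamH 0 0 * ((f w).1 * (starRingEnd ℂ) ((f w).1)) + (lamH 0 1 * ((f w).1 * (starRingEnd ℂ) ((f w).2)) + (lamH 1 0 * ((f w).2 * (starRingEnd ℂ) ((f w).1)) + (lamH 1 1 * ((f w).2 * (starRingEnd ℂ) ((f w).2))))))))))).re) (ball (0:ℂ) 1 ∩ f ⁻¹' W) :=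
    Complex.reCLM.contDiff.comp_contDiffOn (hGc.mono inter_subset_left)
  have hrfC : ContDiffOn ℝ 2 (fun w => r (f w) - (2 * (f w).2.re + 2 * (∑ k, ∑ l, lamS k l * coord2 (f w) k * coord2 (f w) l).re + (∑ k, ∑ l, lamH k l * coord2 (f w) k * starRingEnd ℂ (coord2 (f w) l)).re)) (ball (0:ℂ) 1 ∩ f ⁻¹' W) :=
    hrho2.comp (hf.mono inter_subset_left) (fun w hw => hw.2)
  have hsplit : (fun ζ => r (f ζ)) = fun w => (2 * (f w).2 + (2 * lamS 0 0 * ((f w).1 * (f w).1) + (2 * lamS 0 1 * ((f w).1 * (f w).2) + (2 * lamS 1 0 * ((f w).2 * (f w).1) + (2 * lamS 1 1 * ((f w).2 * (f w).2) + (lamH 0 0 * ((f w).1 * (starRingEnd ℂ) ((f w).1)) + (lamH 0 1 * ((f w).1 * (starRingEnd ℂ) ((f w).2)) + (lamH 1 0 * ((f w).2 * (starRingEnd ℂ) ((f w).1)) + (lamH 1 1 * ((f w).2 * (starRingEnd ℂ) ((f w).2))))))))))).re + (r (f w) - (2 * (f w).2.re + 2 * (∑ k, ∑ l, lamS k l *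 coord2 (f w) k * coord2 (f w) l).re + (∑ k, ∑ l, lamH k l * coord2 (f w) k * starRingEnd ℂ (coord2 (f w) l)).re)) := by
    funext w
    rw [hGre w]
    ring
  have hlapG : lapR (fun w => (2 * (f w).2 + (2 * lamS 0 0 * ((f w).1 * (f w).1) + (2 * lamS 0 1 * ((f w).1 * (f w).2) + (2 * lamS 1 0 * ((f w).2 * (f w).1) + (2 * lamS 1 1 * ((f w).2 * (f w).2) + (lamH 0 0 * ((f w).1 * (starRingEnd ℂ) ((f w).1)) + (lamH 0 1 * ((f w).1 * (starRingEnd ℂ) ((f w).2)) + (lamH 1 0 * ((f w).2 * (starRingEnd ℂ) ((f w).1)) + (lamH 1 1 * ((f w).2 * (starRingEnd ℂ) ((f w).2))))))))))).re) 0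
      = 4 * (wirtingerD (wirtingerDbar (fun w => 2 * (f w).2 + (2 * lamS 0 0 * ((f w).1 * (f w).1) + (2 * lamS 0 1 * ((f w).1 * (f w).2) + (2 * lamS 1 0 * ((f w).2 * (f w).1) + (2 * lamS 1 1 * ((f w).2 * (f w).2) + (lamH 0 0 * ((f w).1 * (starRingEnd ℂ) ((f w).1)) + (lamH 0 1 * ((f w).1 * (starRingEnd ℂ) ((f w).2)) + (lamH 1 0 * ((f w).2 * (starRingEnd ℂ) ((f w).1)) + (lamH 1 1 * ((f w).2 * (starRingEnd ℂ) ((f w).2)))))))))))) 0).re :=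
    Aux.lapR_re hBo h01 hGc
  have hlapadd : lapR (fun w => (2 * (f w).2 + (2 * lamS 0 0 * ((f w).1 * (f w).1) + (2 * lamS 0 1 * ((f w).1 * (f w).2) + (2 * lamS 1 0 * ((f w).2 * (f w).1) + (2 * lamS 1 1 * ((f w).2 * (f w).2) + (lamH 0 0 * ((f w).1 * (starRingEnd ℂ) ((f w).1)) + (lamH 0 1 * ((f w).1 * (starRingEnd ℂ) ((f w).2)) + (lamH 1 0 * ((f w).2 * (starRingEnd ℂ) ((f w).1)) + (lamH 1 1 * ((f w).2 * (starRingEnd ℂ) ((f w).2))))))))))).re + (r (f w) - (2 * (f w).2.re + 2 * (∑ k, ∑ l, lamS k l * coord2 (f w) k * coord2 (f w) l).re + (∑ k, ∑ l, lamH k l * coord2 (f w) k * starRingEnd ℂ (coord2 (f w) l)).re))) 0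
      = lapR (fun w => (2 * (f w).2 + (2 * lamS 0 0 * ((f w).1 * (f w).1) + (2 * lamS 0 1 * ((f w).1 * (f w).2) + (2 * lamS 1 0 * ((f w).2 * (f w).1) + (2 * lamS 1 1 * ((f w).2 * (f w).2) + (lamH 0 0 * ((f w).1 * (starRingEnd ℂ) ((f w).1)) + (lamH 0 1 * ((f w).1 * (starRingEnd ℂ) ((f w).2)) + (lamH 1 0 * ((f w).2 * (starRingEnd ℂ) ((f w).1)) + (lamH 1 1 * ((f w).2 * (starRingEnd ℂ) ((f w).2))))))))))).re) 0 + lapR (fun w => r (f w) - (2 * (f w).2.re + 2 * (∑ k, ∑ l, lamS k l * coord2 (f w) k * coord2 (f w) l).re + (∑ k, ∑ l, lamH k l * coord2 (f w) k * starRingEnd ℂ (coord2 (f w) l)).re)) 0 :=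
    Aux.lapR_add hU0o h0U0 hGreC hrfC
  rw [hsplit, hlapadd, hzero, hlapG, tG]
  have hvv : v₁ * (starRingEnd ℂ) v₁ = ((‖v₁‖^2 : ℝ) : ℂ) := by
    rw [Complex.mul_conj]
    norm_cast
    rw [Complex.normSq_eq_norm_sq]
  rw [hvv]
  rw [show (lamH 0 0 * ((‖v₁‖^2 : ℝ) : ℂ)).re = (lamH 0 0).re * ‖v₁‖^2 from by
    rw [Complex.mul_re, Complex.ofReal_re, Complex.ofReal_im]; ring]
  ring


end
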